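/- arXiv:math/0703137 — 4 statements merged into one kernel-verified Lean document; each statement's English description precedes it below -/
import Mathlib

section
/- Let k be a field of characteristic zero and let D be a derivation on a commutative k-algebra R that is locally nilpotent (for every r in R there exists n with D^n(r) = 0). If h lies in the kernel of D and there exist g in R and a positive integer n with D(g) = h^n, then in the localization R[1/h] there exists an element s with D(s) = 1, where D is extended to R[1/h] by the quotient rule. -/
/-! The inverse of a constant is a constant, so in `R[1/h]` the quotient `s = g / hⁿ` satisfies
`D s = D g / hⁿ = 1`. -/

namespace Derivation

variable {R A : Type*} [CommRing R] [CommRing A] [Algebra R A]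

theorem map_eq_zero_of_mul_eq_one {M : Type*} [AddCommGroup M] [Module A M] [Module R M]
    (D : Derivation R A M) {a b : A} (hab : a * b = 1) (hb : D b = 0) : D a = 0 := by
  simp [D.leibniz_of_mul_eq_one hab, hb]

theorem map_mul_eq_one_of_map_eq (D : Derivation R A A) {a b c : A} (hab : a * b = 1)
    (ha : D a = 0) (hc : D c = a) : D (c * b) = 1 := by
  rw [leibniz, D.map_eq_zero_of_mul_eq_one ((mul_comm b a).trans hab) ha, hc, smul_zero, zero_add,
    smul_eq_mul, mul_comm, hab]

end Derivation

theorem stmt_0_general {k R : Type*} [Field k] [CommRing R] [Algebra k R]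
    (D : Derivation k R R)
    (h : R) (hh : D h = 0)
    (g : R) (n : ℕ) (hg : D g = h ^ n)
    (D' : Derivation k (Localization.Away h) (Localization.Away h))
    (hD' : ∀ r : R, D' (algebraMap R (Localization.Away h) r)
      = algebraMap R (Localization.Away h) (D r)) :
    ∃ s : Localization.Away h, D' s = 1 := by
  set f := algebraMap R (Localization.Away h)
  have hinv : f (h ^ n) * IsLocalization.Away.invSelf h ^ n = 1 := by
    rw [map_pow, ← mul_pow, IsLocalization.Away.mul_invSelf, one_pow]
  have hhn : D' (f (h ^ n)) = 0 := by
    rw [hD', D.leibniz_pow, hh, smul_zero, smul_zero, map_zero]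
  refine ⟨f g * IsLocalization.Away.invSelf h ^ n, D'.map_mul_eq_one_of_map_eq hinv hhn ?_⟩
  rw [hD', hg]

theorem stmt_0 {k R : Type*} [Field k] [CharZero k] [CommRing R] [Algebra k R]
    (D : Derivation k R R)
    (hln : ∀ r : R, ∃ n : ℕ, (⇑D)^[n] r = 0)
    (h : R) (hh : D h = 0)
    (g : R) (n : ℕ) (hn : 0 < n) (hg : D g = h ^ n)
    (D' : Derivation k (Localization.Away h) (Localization.Away h))
    (hD' : ∀ r : R, D' (algebraMap R (Localization.Away h) r)
      = algebraMap R (Localization.Away h) (D r)) :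
    ∃ s : Localization.Away h, D' s = 1 :=
  stmt_0_general D h hh g n hg D' hD'
end

section
/- Let k be a field of characteristic zero, R a commutative k-algebra, and D: R → R a k-derivation. If D is locally nilpotent and there exists s ∈ R with D(s) = 1, then the exponential map gives an isomorphism R ≅ (ker D)[s], i.e., R is a polynomial ring in s over ker D. -/
set_option synthInstance.maxHeartbeats 1000000
set_option maxHeartbeats 1000000

/-- The kernel of a derivation, as a subalgebra. -/
def Derivation.kerSubalgebra {k R : Type*} [CommRing k] [CommRing R] [Algebra k R]
    (D : Derivation k R R) : Subalgebra k R where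
  carrier := {r | D r = 0}
  mul_mem' := by
    intro a b ha hb
    simp only [Set.mem_setOf_eq] at *
    rw [D.leibniz, ha, hb]
    simp
  add_mem' := by
    intro a b ha hb
    simp only [Set.mem_setOf_eq] at *
    rw [map_add, ha, hb, add_zero]
  algebraMap_mem' := fun r => D.map_algebraMap r

section aux
open Polynomial
variable {k R : Type*} [Field k] [CharZero k] [CommRing R] [Algebra k R]

lemma aux_nzsmul {A : Type*} [CommRing A] [Algebra k A] : NoZeroSMulDivisors ℕ A := by
  constructor
  intro n a h
  by_cases hn : n = 0
  · exact Or.inl hn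
  · right
    have : (algebraMap k A (n : k)⁻¹) * ((n : A) * a) = a := by
      rw [← map_natCast (algebraMap k A) n, ← mul_assoc, ← map_mul]
      rw [inv_mul_cancel₀ (Nat.cast_ne_zero.mpr hn)]
      simp
    rw [← this, ← nsmul_eq_mul, h, mul_zero]

/-- antiderivative -/
noncomputable def integ {A : Type*} [CommRing A] [Algebra k A] (q : Polynomial A) :
    Polynomial A :=
  q.sum fun i a => C ((algebraMap k A ((i : k) + 1)⁻¹) * a) * X ^ (i + 1)

lemma derivative_integ {A : Type*} [CommRing A] [Algebra k A] (q : Polynomial A) :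
    derivative (integ (k := k) q) = q := by
  unfold integ
  rw [Polynomial.sum, map_sum]
  conv_rhs => rw [← q.sum_C_mul_X_pow_eq, Polynomial.sum]
  refine Finset.sum_congr rfl fun i hi => ?_
  rw [derivative_C_mul_X_pow]
  congr 1
  · congr 1
    push_cast
    rw [mul_assoc, mul_comm (q.coeff i), ← mul_assoc]
    have h3 : ((i : A) + 1) = algebraMap k A ((i : k) + 1) := by simp
    have h4 : ((i : k) + 1) ≠ 0 := Nat.cast_add_one_ne_zero i
    rw [h3, ← map_mul, inv_mul_cancel₀ h4, map_one, one_mul]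

variable (D : Derivation k R R) {s : R}

omit [CharZero k] in

lemma D_aeval (hs : D s = 1) (p : Polynomial ↥D.kerSubalgebra) :
    D (aeval s p) = aeval s (derivative p) := by
  induction p using Polynomial.induction_on' with
  | add p q hp hq => simp [hp, hq]
  | monomial n a =>
    have ha : D (a : R) = 0 := a.2
    rw [derivative_monomial]
    cases n with
    | zero =>
      simp only [aeval_monomial, pow_zero, mul_one]
      have : algebraMap (↥D.kerSubalgebra) R a = (a : R) := rfl
      simp [this, ha]
    | succ m =>
      simp only [aeval_monomial]
      have h1 : algebraMap (↥D.kerSubalgebra) R a = (a : R) := rfl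
      have h2 : algebraMap (↥D.kerSubalgebra) R (a * (↑(m+1) : ↥D.kerSubalgebra))
          = (a : R) * ((m : R) + 1) := by push_cast [map_mul, h1]; rfl
      rw [D.leibniz, D.leibniz_pow, hs, h1, ha, h2]
      simp only [smul_eq_mul, nsmul_eq_mul, mul_one, mul_zero, add_zero,
        Nat.add_sub_cancel]
      push_cast
      ring
end aux

open Polynomial in
theorem stmt_1 {k R : Type*} [Field k] [CharZero k] [CommRing R] [Algebra k R]
    (D : Derivation k R R)
    (hln : ∀ r : R, ∃ n : ℕ, (⇑D)^[n] r = 0)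
    (s : R) (hs : D s = 1) :
    ∃ e : Polynomial (D.kerSubalgebra) ≃ₐ[k] R,
      e Polynomial.X = s ∧ ∀ a : D.kerSubalgebra, e (Polynomial.C a) = (a : R) := by
  haveI : NoZeroSMulDivisors ℕ ↥D.kerSubalgebra := aux_nzsmul (k := k)
  haveI : IsAddTorsionFree ↥D.kerSubalgebra := ⟨fun n hn a b hab => by
    simp only at hab
    have h : n • (a - b) = 0 := by rw [smul_sub, hab, sub_self]
    exact sub_eq_zero.mp ((smul_eq_zero.mp h).resolve_left hn)⟩
  set φ : Polynomial ↥D.kerSubalgebra →ₐ[k] R := (Polynomial.aeval s).restrictScalars k with hφ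
  have φ_apply : ∀ p, φ p = aeval s p := fun p => rfl
  have φC : ∀ a : ↥D.kerSubalgebra, φ (C a) = (a : R) := by
    intro a; rw [φ_apply, aeval_C]; rfl
  have Dφ : ∀ p, D (φ p) = φ (derivative p) := by
    intro p; rw [φ_apply, φ_apply]; exact D_aeval D hs p
  -- injectivity
  have inj : Function.Injective φ := by
    have key : ∀ n : ℕ, ∀ p : Polynomial ↥D.kerSubalgebra,
        p.natDegree ≤ n → φ p = 0 → p = 0 := by
      intro n
      induction n with
      | zero =>
        intro p hdeg h0
        rw [Polynomial.eq_C_of_natDegree_le_zero hdeg] at h0 ⊢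
        rw [φC] at h0
        have : p.coeff 0 = 0 := Subtype.ext h0
        rw [this, map_zero]
      | succ m ih =>
        intro p hdeg h0
        have hd : φ (derivative p) = 0 := by rw [← Dφ, h0, map_zero]
        have : derivative p = 0 :=
          ih _ (le_trans (natDegree_derivative_le p) (by omega)) hd
        rw [eq_C_of_derivative_eq_zero this] at h0 ⊢
        rw [φC] at h0
        have : p.coeff 0 = 0 := Subtype.ext h0
        rw [this, map_zero]
    intro p q hpq
    have : φ (p - q) = 0 := by rw [map_sub, hpq, sub_self]
    have := key (p - q).natDegree _ le_rfl this
    exact sub_eq_zero.mp this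
  -- surjectivity
  have surj : Function.Surjective φ := by
    have key : ∀ n : ℕ, ∀ r : R, (⇑D)^[n] r = 0 → ∃ p, φ p = r := by
      intro n
      induction n with
      | zero => intro r hr; exact ⟨0, by simp at hr; simp [hr.symm]⟩
      | succ m ih =>
        intro r hr
        rw [Function.iterate_succ_apply] at hr
        obtain ⟨q, hq⟩ := ih (D r) hr
        have hker : D (r - φ (integ (k := k) q)) = 0 := by
          rw [map_sub, Dφ, derivative_integ, hq, sub_self]
        refine ⟨C ⟨r - φ (integ (k := k) q), hker⟩ + integ (k := k) q, ?_⟩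
        rw [map_add, φC]
        simp
    intro r
    obtain ⟨n, hn⟩ := hln r
    exact key n r hn
  refine ⟨AlgEquiv.ofBijective φ ⟨inj, surj⟩, ?_, ?_⟩
  · show φ X = s
    rw [φ_apply, aeval_X]
  · intro a
    exact φC a
end

section
/- Let p, q be coprime positive integers. The k-algebra homomorphism k[x,y]/(x^p - y^q) → k[t] sending x to t^q and y to t^p is injective, and its image is the subalgebra of k[t] generated by t^p and t^q. -/
/-- The normalization map `k[x,y]/(x^p - y^q) → k[t]` (on the level of `k[x,y]`),
sending `x` to `t^q` and `y` to `t^p`. -/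
noncomputable def cuspNormalization (k : Type*) [Field k] (p q : ℕ) :
    MvPolynomial (Fin 2) k →ₐ[k] Polynomial k :=
  MvPolynomial.aeval (fun i : Fin 2 =>
    if i = 0 then (Polynomial.X : Polynomial k) ^ q else Polynomial.X ^ p)

open MvPolynomial in
lemma cusp_monomial_eq {k : Type*} [Field k] (u : Fin 2 →₀ ℕ) (a : k) :
    (monomial u) a = C a * X 0 ^ (u 0) * X 1 ^ (u 1) := by
  rw [MvPolynomial.monomial_eq, Finsupp.prod_fintype _ _ (fun i => pow_zero _),
    Fin.prod_univ_two, mul_assoc]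

open Polynomial in
lemma cusp_aeval_mon {k : Type*} [Field k] (p q : ℕ) (a : k) (i j : ℕ) :
    cuspNormalization k p q (MvPolynomial.C a * MvPolynomial.X 0 ^ i * MvPolynomial.X 1 ^ j)
      = C a * X ^ (q * i + p * j) := by
  simp [cuspNormalization, pow_add, ← pow_mul, mul_assoc]

lemma cusp_key {p q : ℕ} (hp : 0 < p) (hpq : Nat.Coprime p q)
    {b b' j j' : ℕ} (hb : b < p) (hb' : b' < p)
    (h : q * b + p * j = q * b' + p * j') : b = b' ∧ j = j' := by
  have hmod : q * b ≡ q * b' [MOD p] := by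
    have : (q * b + p * j) % p = (q * b' + p * j') % p := by rw [h]
    simpa [Nat.add_mul_mod_self_left, Nat.ModEq] using this
  have hb2 : b ≡ b' [MOD p] := Nat.ModEq.cancel_left_of_coprime hpq hmod
  have hbb : b = b' := by
    have h3 : b % p = b' % p := hb2
    rwa [Nat.mod_eq_of_lt hb, Nat.mod_eq_of_lt hb'] at h3
  subst hbb
  constructor
  · rfl
  · have : p * j = p * j' := by omega
    exact Nat.eq_of_mul_eq_mul_left hp this

theorem stmt_4 {k : Type*} [Field k] (p q : ℕ) (hp : 0 < p) (hq : 0 < q)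
    (hpq : Nat.Coprime p q) :
    RingHom.ker (cuspNormalization k p q)
      = Ideal.span {(MvPolynomial.X 0 : MvPolynomial (Fin 2) k) ^ p - MvPolynomial.X 1 ^ q}
    ∧ (cuspNormalization k p q).range
      = Algebra.adjoin k {(Polynomial.X : Polynomial k) ^ p, Polynomial.X ^ q} := by
  classical
  set A := cuspNormalization k p q with hA
  set I : Ideal (MvPolynomial (Fin 2) k) :=
    Ideal.span {(MvPolynomial.X 0 : MvPolynomial (Fin 2) k) ^ p - MvPolynomial.X 1 ^ q} with hI
  have hgen : A ((MvPolynomial.X 0 : MvPolynomial (Fin 2) k) ^ p - MvPolynomial.X 1 ^ q) = 0 := by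
    simp [hA, cuspNormalization, ← pow_mul, mul_comm]
  -- I ≤ ker
  have hIker : I ≤ RingHom.ker (A : MvPolynomial (Fin 2) k →+* Polynomial k) := by
    rw [hI, Ideal.span_le]
    intro x hx
    simp only [Set.mem_singleton_iff] at hx
    subst hx
    simpa [RingHom.mem_ker] using hgen
  constructor
  · apply le_antisymm _ hIker
    intro f hf
    -- reduce f modulo I
    have hred : ∀ g : MvPolynomial (Fin 2) k,
        ∃ r : MvPolynomial (Fin 2) k, g - r ∈ I ∧ ∀ d ∈ r.support, d 0 < p := by
      intro g
      induction g using MvPolynomial.induction_on' with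
      | add g₁ g₂ ih₁ ih₂ =>
        obtain ⟨r₁, hr₁, hs₁⟩ := ih₁
        obtain ⟨r₂, hr₂, hs₂⟩ := ih₂
        refine ⟨r₁ + r₂, by simpa [add_sub_add_comm] using I.add_mem hr₁ hr₂, ?_⟩
        intro d hd
        rcases Finset.mem_union.mp (MvPolynomial.support_add hd) with h | h
        · exact hs₁ d h
        · exact hs₂ d h
      | monomial u a =>
        set u' : Fin 2 →₀ ℕ :=
          Finsupp.single 0 (u 0 % p) + Finsupp.single 1 (u 1 + q * (u 0 / p)) with hu'
        have hu'0 : u' 0 = u 0 % p := by simp [hu', Finsupp.single_apply]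
        have hu'1 : u' 1 = u 1 + q * (u 0 / p) := by simp [hu', Finsupp.single_apply]
        refine ⟨MvPolynomial.monomial u' a, ?_, ?_⟩
        · rw [cusp_monomial_eq u a, cusp_monomial_eq u' a, hu'0, hu'1]
          have hdvd : ((MvPolynomial.X 0 : MvPolynomial (Fin 2) k) ^ p - MvPolynomial.X 1 ^ q)
              ∣ (MvPolynomial.X 0 : MvPolynomial (Fin 2) k) ^ (p * (u 0 / p))
                - MvPolynomial.X 1 ^ (q * (u 0 / p)) := by
            rw [pow_mul, pow_mul]
            exact sub_dvd_pow_sub_pow _ _ _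
          have hfac : (MvPolynomial.C a * MvPolynomial.X 0 ^ (u 0) * MvPolynomial.X 1 ^ (u 1)
              : MvPolynomial (Fin 2) k)
              - MvPolynomial.C a * MvPolynomial.X 0 ^ (u 0 % p)
                * MvPolynomial.X 1 ^ (u 1 + q * (u 0 / p))
              = (MvPolynomial.C a * MvPolynomial.X 0 ^ (u 0 % p) * MvPolynomial.X 1 ^ (u 1))
                * ((MvPolynomial.X 0 : MvPolynomial (Fin 2) k) ^ (p * (u 0 / p))
                  - MvPolynomial.X 1 ^ (q * (u 0 / p))) := by
            have h0 : u 0 = u 0 % p + p * (u 0 / p) := (Nat.mod_add_div _ _).symm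
            set m := u 0 % p with hm
            set d := u 0 / p with hd'
            rw [h0, pow_add, pow_add]
            ring
          rw [hfac]
          exact Ideal.mul_mem_left _ _ (Ideal.mem_span_singleton.mpr hdvd)
        · intro d hd
          have := MvPolynomial.support_monomial_subset hd
          simp only [Finset.mem_singleton] at this
          subst this
          rw [hu'0]
          exact Nat.mod_lt _ hp
    obtain ⟨r, hrI, hrs⟩ := hred f
    have hrker : A r = 0 := by
      have h1 : A (f - r) = 0 := hIker hrI
      have h2 : A f = 0 := hf
      rw [map_sub, h2, zero_sub, neg_eq_zero] at h1
      exact h1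
    -- show r = 0
    have hr0 : r = 0 := by
      by_contra hne
      obtain ⟨d, hd⟩ := Finset.nonempty_iff_ne_empty.mpr
        (fun h => hne (MvPolynomial.support_eq_empty.mp h))
      have hval : A r = ∑ e ∈ r.support,
          Polynomial.C (MvPolynomial.coeff e r) * Polynomial.X ^ (q * e 0 + p * e 1) := by
        conv_lhs => rw [← MvPolynomial.support_sum_monomial_coeff r]
        rw [map_sum]
        refine Finset.sum_congr rfl fun e _ => ?_
        rw [cusp_monomial_eq e (MvPolynomial.coeff e r), cusp_aeval_mon]
      have hcoeff : (A r).coeff (q * d 0 + p * d 1) = MvPolynomial.coeff d r := by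
        rw [hval, Polynomial.finset_sum_coeff]
        rw [Finset.sum_eq_single d]
        · simp
        · intro e he hne'
          simp only [Polynomial.coeff_C_mul, Polynomial.coeff_X_pow]
          rw [if_neg, mul_zero]
          intro hcontra
          obtain ⟨h1, h2⟩ := cusp_key hp hpq (hrs e he) (hrs d hd) hcontra.symm
          exact hne' (Finsupp.ext fun i => by fin_cases i <;> simp [h1, h2])
        · intro hcontra
          exact absurd hd hcontra
      rw [hrker, Polynomial.coeff_zero] at hcoeff
      exact (MvPolynomial.mem_support_iff.mp hd) hcoeff.symm
    have := hrI
    rw [hr0, sub_zero] at this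
    exact this
  · -- range
    rw [hA, cuspNormalization, ← Algebra.adjoin_range_eq_range_aeval]
    congr 1
    ext z
    constructor
    · rintro ⟨i, rfl⟩
      fin_cases i <;> simp [Set.pair_comm]
    · rintro (rfl | rfl)
      · exact ⟨1, by simp⟩
      · exact ⟨0, by simp⟩
end

section
/- Let D be a locally nilpotent derivation on a commutative ring R containing ℚ, and suppose s ∈ R satisfies D(s) = 1. Then for every r ∈ R, the element π(r) := Σ_{n≥0} (-s)^n/n! · D^n(r) lies in the kernel of D, and π: R → ker(D) is a ring homomorphism restricting to the identity on ker(D) (the Dixmier map). -/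
/-!
`π` is the ring homomorphism `exp(X D) : R → R[X]`, `r ↦ ∑ Dⁿ r Xⁿ / n!` (multiplicative by the
Leibniz rule, a polynomial by local nilpotence), followed by evaluation at `X = -s`. Since `D` acts
on the coefficients of `p = exp(X D) r` as `d/dX`, `D (p(-s)) = p'(-s) (1 + D(-s)) = 0`.
-/

open Finset Polynomial
open scoped Nat

namespace Derivation

section Iterate
variable {A R : Type*} [CommSemiring A] [CommSemiring R] [Algebra A R] (D : Derivation A R R)

theorem iterate_apply_mul (n : ℕ) (a b : R) :
    D^[n] (a * b) = ∑ ij ∈ antidiagonal n, n.choose ij.1 • (D^[ij.1] a * D^[ij.2] b) := by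
  induction n with
  | zero => simp
  | succ n ih =>
    rw [sum_antidiagonal_choose_succ_nsmul (fun i j => D^[i] a * D^[j] b) n]
    simp only [Function.iterate_succ_apply', ih, map_sum, map_nsmul, leibniz, smul_eq_mul,
      smul_add, sum_add_distrib]
    congr 1
    refine sum_congr rfl fun ⟨i, j⟩ hij => ?_
    rw [n.choose_symm_of_eq_add (mem_antidiagonal.1 hij).symm]
    ring

theorem iterate_eq_zero_of_le {r : R} {m n : ℕ} (h : D^[m] r = 0) (hmn : m ≤ n) :
    D^[n] r = 0 := by
  obtain ⟨k, rfl⟩ := Nat.exists_eq_add_of_le hmn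
  rw [add_comm, Function.iterate_add_apply, h, iterate_map_zero]

end Iterate

section Eval
variable {A R : Type*} [CommRing A] [CommRing R] [Algebra A R] (D : Derivation A R R)

theorem apply_eval_of_apply_coeff {p : R[X]} (hp : ∀ n, D (p.coeff n) = (derivative p).coeff n)
    (x : R) : D (p.eval x) = (derivative p).eval x * (1 + D x) := by
  have hdeg : (derivative p).natDegree < p.natDegree + 1 :=
    (natDegree_derivative_le p).trans_lt (by omega)
  rw [eval_eq_sum_range, map_sum, mul_one_add]
  nth_rw 1 [eval_eq_sum_range' hdeg]
  rw [derivative_eval, sum_over_range _ (by simp), sum_mul, ← sum_add_distrib]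
  refine sum_congr rfl fun i _ => ?_
  rw [leibniz, leibniz_pow, hp, smul_eq_mul, smul_eq_mul, nsmul_eq_mul, smul_eq_mul]
  ring

end Eval

section DividedIterate
variable {A R : Type*} [CommRing A] [CommRing R] [Algebra A R] [Algebra ℚ R]
  (D : Derivation A R R)

def dividedIterate (n : ℕ) (r : R) : R := (n ! : ℚ)⁻¹ • D^[n] r

theorem dividedIterate_mul (n : ℕ) (a b : R) :
    D.dividedIterate n (a * b) =
      ∑ ij ∈ antidiagonal n, D.dividedIterate ij.1 a * D.dividedIterate ij.2 b := by
  rw [dividedIterate, iterate_apply_mul, smul_sum]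
  refine sum_congr rfl fun ⟨i, j⟩ hij => ?_
  obtain rfl : i + j = n := mem_antidiagonal.1 hij
  have hfact := Nat.add_choose_mul_factorial_mul_factorial i j
  rw [← Nat.choose_symm_add] at hfact
  simp only [dividedIterate, smul_mul_smul_comm, ← Nat.cast_smul_eq_nsmul ℚ, smul_smul]
  congr 1
  field_simp
  exact_mod_cast hfact

theorem apply_dividedIterate (n : ℕ) (r : R) :
    D (D.dividedIterate n r) = D.dividedIterate (n + 1) r * (n + 1) := by
  have hn : ((n + 1 : ℕ) : ℚ) ≠ 0 := by positivity
  rw [dividedIterate, dividedIterate, map_rat_smul, ← Function.iterate_succ_apply' D,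
    mul_comm, ← Nat.cast_succ, ← nsmul_eq_mul, ← Nat.cast_smul_eq_nsmul ℚ, smul_smul,
    Nat.factorial_succ, Nat.cast_mul, mul_inv, ← mul_assoc, mul_inv_cancel₀ hn, one_mul]

theorem dividedIterate_of_apply_eq_zero {a : R} (ha : D a = 0) (n : ℕ) :
    D.dividedIterate n a = if n = 0 then a else 0 := by
  cases n with
  | zero => simp [dividedIterate]
  | succ n => simp [dividedIterate, ha, iterate_map_zero]

end DividedIterate

section LocallyNilpotent
variable {A R : Type*} [CommRing A] [CommRing R] [Algebra A R] [Algebra ℚ R]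
  (D : Derivation A R R)

def IsLocallyNilpotent : Prop := ∀ r, ∃ n, D^[n] r = 0

theorem finite_support_dividedIterate (hD : D.IsLocallyNilpotent) (r : R) :
    (Function.support (D.dividedIterate · r)).Finite := by
  obtain ⟨m, hm⟩ := hD r
  refine (Set.finite_Iio m).subset fun n hn => ?_
  by_contra h
  exact hn (by simp [dividedIterate, D.iterate_eq_zero_of_le hm (not_lt.1 h)])

noncomputable def expPoly (hD : D.IsLocallyNilpotent) : R →+* R[X] where
  toFun r := ofFinsupp (.ofCoeff (.ofSupportFinite _ (D.finite_support_dividedIterate hD r)))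
  map_zero' := by ext; simp [Finsupp.ofSupportFinite_coe, dividedIterate]
  map_add' a b := by ext; simp [Finsupp.ofSupportFinite_coe, dividedIterate, iterate_map_add]
  map_one' := by
    ext n
    simp [Finsupp.ofSupportFinite_coe, D.dividedIterate_of_apply_eq_zero D.map_one_eq_zero,
      coeff_one]
  map_mul' a b := by ext n; simp [Finsupp.ofSupportFinite_coe, coeff_mul, dividedIterate_mul]

theorem coeff_expPoly (hD : D.IsLocallyNilpotent) (r : R) (n : ℕ) :
    (expPoly D hD r).coeff n = D.dividedIterate n r := by
  simp [expPoly, Finsupp.ofSupportFinite_coe]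

theorem expPoly_of_apply_eq_zero (hD : D.IsLocallyNilpotent) {a : R} (ha : D a = 0) :
    expPoly D hD a = C a := by
  ext n
  rw [coeff_expPoly, coeff_C, D.dividedIterate_of_apply_eq_zero ha]

noncomputable def dixmierMap (hD : D.IsLocallyNilpotent) (s : R) : R →+* R :=
  (evalRingHom (-s)).comp (expPoly D hD)

theorem dixmierMap_apply (hD : D.IsLocallyNilpotent) (s r : R) :
    dixmierMap D hD s r = ∑ᶠ n : ℕ, (n ! : ℚ)⁻¹ • ((-s) ^ n * D^[n] r) := by
  rw [dixmierMap, RingHom.comp_apply, coe_evalRingHom, eval_eq_sum, sum_def]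
  have hterm (n : ℕ) :
      (n ! : ℚ)⁻¹ • ((-s) ^ n * D^[n] r) = (expPoly D hD r).coeff n * (-s) ^ n := by
    rw [coeff_expPoly, dividedIterate, smul_mul_assoc, mul_comm]
  simp only [hterm]
  refine (finsum_eq_sum_of_support_subset _ fun n hn => ?_).symm
  rw [Function.mem_support] at hn
  exact mem_support_iff.2 (left_ne_zero_of_mul hn)

theorem apply_dixmierMap (hD : D.IsLocallyNilpotent) {s : R} (hs : D s = 1) (r : R) :
    D (dixmierMap D hD s r) = 0 := by
  rw [dixmierMap, RingHom.comp_apply, coe_evalRingHom, apply_eval_of_apply_coeff, map_neg, hs,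
    add_neg_cancel, mul_zero]
  intro n
  rw [coeff_derivative, coeff_expPoly, coeff_expPoly, apply_dividedIterate]

theorem dixmierMap_of_apply_eq_zero (hD : D.IsLocallyNilpotent) (s : R) {a : R}
    (ha : D a = 0) : dixmierMap D hD s a = a := by
  rw [dixmierMap, RingHom.comp_apply, expPoly_of_apply_eq_zero D hD ha, coe_evalRingHom, eval_C]

end LocallyNilpotent
end Derivation

theorem stmt_17 {R : Type*} [CommRing R] [Algebra ℚ R]
    (D : Derivation ℚ R R)
    (hln : ∀ r : R, ∃ n : ℕ, (⇑D)^[n] r = 0)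
    (s : R) (hs : D s = 1) :
    let π : R → R := fun r => ∑ᶠ n : ℕ, ((n.factorial : ℚ)⁻¹) • ((-s) ^ n * (⇑D)^[n] r)
    (∀ r, D (π r) = 0) ∧ (∀ a b, π (a * b) = π a * π b) ∧ (∀ a b, π (a + b) = π a + π b)
      ∧ π 1 = 1 ∧ ∀ a, D a = 0 → π a = a := by
  intro π
  have hπ (r : R) : π r = Derivation.dixmierMap D hln s r := (D.dixmierMap_apply hln s r).symm
  simp only [hπ]
  exact ⟨D.apply_dixmierMap hln hs, map_mul _, map_add _, map_one _,
    fun a => D.dixmierMap_of_apply_eq_zero hln s⟩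
end
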